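/- arXiv:1811.07455 — 4 statements merged into one kernel-verified Lean document; each statement's English description precedes it below -/
import Mathlib

section
/- Let A = {a₁,…,a_{n₁}} and B = {b₁,…,b_{n₂}} be weighted point sets in ℝ^d with weights α_i, β_j ≥ 0 and total weights W_A, W_B. Let A' = {a'₁,…,a'_{n₁}} and B' = {b'₁,…,b'_{n₂}} be point sets (with the same weights) satisfying ‖a_i − a'_i‖ ≤ εΔ and ‖b_j − b'_j‖ ≤ εΔ for all i, j, where ε, Δ > 0. Then EMD(A, B) ≤ (1 + 2ε)·EMD(A', B') + (2ε + 4ε²)Δ², where EMD(X, Y) = (1/min{W_X, W_Y})·min_F Σ_{ij} f_{ij}‖x_i − y_j‖² over feasible flows F. -/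
open Finset

/-- A feasible flow between weight vectors `α` and `β`. -/
def IsFeasibleFlow {n1 n2 : ℕ} (α : Fin n1 → ℝ) (β : Fin n2 → ℝ)
    (f : Fin n1 → Fin n2 → ℝ) : Prop :=
  (∀ i j, 0 ≤ f i j) ∧ (∀ j, ∑ i, f i j ≤ β j) ∧ (∀ i, ∑ j, f i j ≤ α i) ∧
    (∑ i, ∑ j, f i j = min (∑ i, α i) (∑ j, β j))

/-- Earth mover's distance with squared Euclidean ground cost, normalized by the
minimum of the total weights. -/
noncomputable def EMD {d n1 n2 : ℕ} (a : Fin n1 → EuclideanSpace ℝ (Fin d))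
    (b : Fin n2 → EuclideanSpace ℝ (Fin d)) (α : Fin n1 → ℝ) (β : Fin n2 → ℝ) : ℝ :=
  (1 / min (∑ i, α i) (∑ j, β j)) *
    sInf {c : ℝ | ∃ f, IsFeasibleFlow α β f ∧ c = ∑ i, ∑ j, f i j * ‖a i - b j‖ ^ 2}

lemma product_flow_feasible {n1 n2 : ℕ} (α : Fin n1 → ℝ) (β : Fin n2 → ℝ)
    (hα : ∀ i, 0 ≤ α i) (hβ : ∀ j, 0 ≤ β j)
    (hWA : 0 < ∑ i, α i) (hWB : 0 < ∑ j, β j) :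
    IsFeasibleFlow α β (fun i j => α i * β j / max (∑ i, α i) (∑ j, β j)) := by
  set WA := ∑ i, α i
  set WB := ∑ j, β j
  have hM : 0 < max WA WB := lt_max_of_lt_left hWA
  refine ⟨fun i j => div_nonneg (mul_nonneg (hα i) (hβ j)) hM.le, fun j => ?_, fun i => ?_, ?_⟩
  · rw [← Finset.sum_div, ← Finset.sum_mul, div_le_iff₀ hM]
    nlinarith [le_max_left WA WB, hβ j]
  · have : ∑ j, α i * β j / max WA WB = α i * WB / max WA WB := by
      rw [← Finset.sum_div, ← Finset.mul_sum]
    rw [this, div_le_iff₀ hM]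
    exact mul_le_mul_of_nonneg_left (le_max_right _ _) (hα i)
  · have h1 : ∀ i : Fin n1, ∑ j, α i * β j / max WA WB = α i * WB / max WA WB := fun i => by
      rw [← Finset.sum_div, ← Finset.mul_sum]
    rw [Finset.sum_congr rfl fun i _ => h1 i, ← Finset.sum_div, ← Finset.sum_mul,
      ← min_mul_max WA WB, mul_div_assoc, div_self hM.ne', mul_one]
  
/-- Perturbation bound for EMD: moving every point by at most `εΔ` changes the
EMD by `EMD(A,B) ≤ (1+2ε)·EMD(A',B') + (2ε+4ε²)Δ²`. -/
theorem stmt3 {d n1 n2 : ℕ}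
    (a a' : Fin n1 → EuclideanSpace ℝ (Fin d)) (b b' : Fin n2 → EuclideanSpace ℝ (Fin d))
    (α : Fin n1 → ℝ) (β : Fin n2 → ℝ)
    (hα : ∀ i, 0 ≤ α i) (hβ : ∀ j, 0 ≤ β j)
    (hWA : 0 < ∑ i, α i) (hWB : 0 < ∑ j, β j)
    (ε Δ : ℝ) (hε : 0 < ε) (hΔ : 0 < Δ)
    (ha : ∀ i, ‖a i - a' i‖ ≤ ε * Δ) (hb : ∀ j, ‖b j - b' j‖ ≤ ε * Δ) :
    EMD a b α β ≤ (1 + 2 * ε) * EMD a' b' α β + (2 * ε + 4 * ε ^ 2) * Δ ^ 2 := by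
  set WA := ∑ i, α i with hWAdef
  set WB := ∑ j, β j with hWBdef
  set W := min WA WB with hWdef
  have hWpos : 0 < W := lt_min hWA hWB
  set K := (2 * ε + 4 * ε ^ 2) * Δ ^ 2 with hKdef
  have hKpos : 0 < K := by positivity
  set S := {c : ℝ | ∃ f, IsFeasibleFlow α β f ∧ c = ∑ i, ∑ j, f i j * ‖a i - b j‖ ^ 2} with hSdef
  set S' := {c : ℝ | ∃ f, IsFeasibleFlow α β f ∧ c = ∑ i, ∑ j, f i j * ‖a' i - b' j‖ ^ 2}
    with hS'def
  have hS'ne : S'.Nonempty :=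
    ⟨_, _, product_flow_feasible α β hα hβ hWA hWB, rfl⟩
  have hSbdd : BddBelow S := by
    refine ⟨0, fun c hc => ?_⟩
    obtain ⟨f, hf, rfl⟩ := hc
    exact Finset.sum_nonneg fun i _ => Finset.sum_nonneg fun j _ =>
      mul_nonneg (hf.1 i j) (by positivity)
  have hkey : ∀ c' ∈ S', sInf S ≤ (1 + 2 * ε) * c' + K * W := by
    rintro c' ⟨f, hf, rfl⟩
    have hmem : (∑ i, ∑ j, f i j * ‖a i - b j‖ ^ 2) ∈ S := ⟨f, hf, rfl⟩
    refine (csInf_le hSbdd hmem).trans ?_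
    have hpt : ∀ i j, f i j * ‖a i - b j‖ ^ 2 ≤
        (1 + 2 * ε) * (f i j * ‖a' i - b' j‖ ^ 2) + K * f i j := by
      intro i j
      have hnorm : ‖a i - b j‖ ≤ ‖a' i - b' j‖ + 2 * (ε * Δ) := by
        have : a i - b j = (a i - a' i) + (a' i - b' j) + (b' j - b j) := by abel
        rw [this]
        calc ‖(a i - a' i) + (a' i - b' j) + (b' j - b j)‖
            ≤ ‖(a i - a' i) + (a' i - b' j)‖ + ‖b' j - b j‖ := norm_add_le _ _
          _ ≤ ‖a i - a' i‖ + ‖a' i - b' j‖ + ‖b' j - b j‖ := by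
              gcongr; exact norm_add_le _ _
          _ ≤ ε * Δ + ‖a' i - b' j‖ + ε * Δ := by
              have hbj := hb j
              rw [norm_sub_rev] at hbj
              gcongr <;> first | exact ha i | exact hbj
          _ = ‖a' i - b' j‖ + 2 * (ε * Δ) := by ring
      have hsq : ‖a i - b j‖ ^ 2 ≤ (‖a' i - b' j‖ + 2 * (ε * Δ)) ^ 2 :=
        pow_le_pow_left₀ (norm_nonneg _) hnorm 2
      have hbound : ‖a i - b j‖ ^ 2 ≤ (1 + 2 * ε) * ‖a' i - b' j‖ ^ 2 + K := by
        nlinarith [mul_nonneg hε.le (sq_nonneg (‖a' i - b' j‖ - Δ)), hsq]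
      calc f i j * ‖a i - b j‖ ^ 2
          ≤ f i j * ((1 + 2 * ε) * ‖a' i - b' j‖ ^ 2 + K) :=
            mul_le_mul_of_nonneg_left hbound (hf.1 i j)
        _ = (1 + 2 * ε) * (f i j * ‖a' i - b' j‖ ^ 2) + K * f i j := by ring
    calc ∑ i, ∑ j, f i j * ‖a i - b j‖ ^ 2
        ≤ ∑ i, ∑ j, ((1 + 2 * ε) * (f i j * ‖a' i - b' j‖ ^ 2) + K * f i j) :=
          Finset.sum_le_sum fun i _ => Finset.sum_le_sum fun j _ => hpt i j
      _ = (1 + 2 * ε) * (∑ i, ∑ j, f i j * ‖a' i - b' j‖ ^ 2) + K * (∑ i, ∑ j, f i j) := by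
          simp [Finset.sum_add_distrib, Finset.mul_sum]
      _ = (1 + 2 * ε) * (∑ i, ∑ j, f i j * ‖a' i - b' j‖ ^ 2) + K * W := by
          rw [hf.2.2.2]
  have h2 : sInf S ≤ (1 + 2 * ε) * sInf S' + K * W := by
    have hdiv : (sInf S - K * W) / (1 + 2 * ε) ≤ sInf S' := by
      refine le_csInf hS'ne fun c' hc' => ?_
      rw [div_le_iff₀ (by linarith)]
      nlinarith [hkey c' hc']
    rw [div_le_iff₀ (by linarith)] at hdiv
    nlinarith
  have hrw : (1 / W) * ((1 + 2 * ε) * sInf S' + K * W) =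
      (1 + 2 * ε) * ((1 / W) * sInf S') + K := by
    field_simp
  have := mul_le_mul_of_nonneg_left h2 (le_of_lt (one_div_pos.mpr hWpos))
  rw [hrw] at this
  show (1 / W) * sInf S ≤ (1 + 2 * ε) * ((1 / W) * sInf S') + K
  exact this
end

section
/- Let A, B be weighted point sets in ℝ^d as in the geometric alignment problem, and let S_A, S_B be weighted point sets (given in expanded representation with the same weight vectors as A, B) such that ‖a_i − a'_i‖ ≤ εΔ and ‖b_j − b'_j‖ ≤ εΔ for all i, j, where these bounds are invariant under rigid transformations. For c ≥ 1, let T̃ be a rigid transformation with EMD(S_A, T̃(S_B)) ≤ c·min_T EMD(S_A, T(S_B)). Then EMD(A, T̃(B)) ≤ c(1 + 2ε)²·min_T EMD(A, T(B)) + 2ε(c + 1 + 2cε)(1 + 2ε)Δ². -/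
open Finset

/-- The product flow witnesses feasibility. -/
lemma flow_exists {n1 n2 : ℕ} (α : Fin n1 → ℝ) (β : Fin n2 → ℝ)
    (hα : ∀ i, 0 ≤ α i) (hβ : ∀ j, 0 ≤ β j)
    (hWA : 0 < ∑ i, α i) (hWB : 0 < ∑ j, β j) :
    ∃ f, IsFeasibleFlow α β f := by
  set WA := ∑ i, α i with hWAdef
  set WB := ∑ j, β j with hWBdef
  set M := max WA WB with hM
  have hM0 : 0 < M := lt_max_of_lt_left hWA
  refine ⟨fun i j => α i * β j / M,
    fun i j => div_nonneg (mul_nonneg (hα i) (hβ j)) hM0.le, ?_, ?_, ?_⟩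
  · intro j
    have h0 : ∑ i, α i * β j / M = WA * β j / M := by
      rw [← Finset.sum_div, ← Finset.sum_mul]
    rw [h0]
    have h1 : WA / M ≤ 1 := by
      rw [div_le_one hM0]; exact le_max_left _ _
    calc WA * β j / M = (WA / M) * β j := by ring
      _ ≤ 1 * β j := mul_le_mul_of_nonneg_right h1 (hβ j)
      _ = β j := one_mul _
  · intro i
    have h0 : ∑ j, α i * β j / M = α i * WB / M := by
      rw [← Finset.sum_div, ← Finset.mul_sum]
    rw [h0]
    have h1 : WB / M ≤ 1 := by
      rw [div_le_one hM0]; exact le_max_right _ _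
    calc α i * WB / M = (WB / M) * α i := by ring
      _ ≤ 1 * α i := mul_le_mul_of_nonneg_right h1 (hα i)
      _ = α i := one_mul _
  · have h0 : ∑ i, ∑ j, α i * β j / M = (∑ i, ∑ j, α i * β j) / M := by
      simp [Finset.sum_div]
    have h1 : ∑ i, ∑ j, α i * β j = WA * WB := by
      rw [← Finset.sum_mul_sum]
    rw [h0, h1]
    show WA * WB / M = WA ⊓ WB
    rw [eq_comm, eq_div_iff (ne_of_gt hM0), hM]
    exact min_mul_max WA WB

/-- If the ground costs are pointwise comparable, so are the EMDs. -/
lemma emd_compare {d n1 n2 : ℕ}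
    (u u' : Fin n1 → EuclideanSpace ℝ (Fin d)) (v v' : Fin n2 → EuclideanSpace ℝ (Fin d))
    (α : Fin n1 → ℝ) (β : Fin n2 → ℝ)
    (hα : ∀ i, 0 ≤ α i) (hβ : ∀ j, 0 ≤ β j)
    (hWA : 0 < ∑ i, α i) (hWB : 0 < ∑ j, β j)
    (K C : ℝ) (hK : 0 < K)
    (hpt : ∀ i j, ‖u i - v j‖ ^ 2 ≤ K * ‖u' i - v' j‖ ^ 2 + C) :
    EMD u v α β ≤ K * EMD u' v' α β + C := by
  set W := min (∑ i, α i) (∑ j, β j) with hWdef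
  have hW : 0 < W := lt_min hWA hWB
  set S : Set ℝ :=
    {x : ℝ | ∃ f, IsFeasibleFlow α β f ∧ x = ∑ i, ∑ j, f i j * ‖u i - v j‖ ^ 2} with hS
  set S' : Set ℝ :=
    {x : ℝ | ∃ f, IsFeasibleFlow α β f ∧ x = ∑ i, ∑ j, f i j * ‖u' i - v' j‖ ^ 2} with hS'
  obtain ⟨f₀, hf₀⟩ := flow_exists α β hα hβ hWA hWB
  have hSne : S.Nonempty := ⟨_, f₀, hf₀, rfl⟩
  have hS'ne : S'.Nonempty := ⟨_, f₀, hf₀, rfl⟩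
  have hSbdd : BddBelow S := by
    refine ⟨0, fun x hx => ?_⟩
    obtain ⟨f, hf, rfl⟩ := hx
    exact Finset.sum_nonneg fun i _ => Finset.sum_nonneg fun j _ =>
      mul_nonneg (hf.1 i j) (by positivity)
  have key : ∀ x ∈ S', sInf S ≤ K * x + C * W := by
    rintro x ⟨f, hf, rfl⟩
    have h1 : sInf S ≤ ∑ i, ∑ j, f i j * ‖u i - v j‖ ^ 2 :=
      csInf_le hSbdd ⟨f, hf, rfl⟩
    have h2 : ∑ i, ∑ j, f i j * ‖u i - v j‖ ^ 2 ≤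
        ∑ i, ∑ j, (K * (f i j * ‖u' i - v' j‖ ^ 2) + C * f i j) := by
      refine Finset.sum_le_sum fun i _ => Finset.sum_le_sum fun j _ => ?_
      have h3 := mul_le_mul_of_nonneg_left (hpt i j) (hf.1 i j)
      nlinarith [h3]
    have h4 : ∑ i, ∑ j, (K * (f i j * ‖u' i - v' j‖ ^ 2) + C * f i j) =
        K * (∑ i, ∑ j, f i j * ‖u' i - v' j‖ ^ 2) + C * (∑ i, ∑ j, f i j) := by
      simp only [Finset.sum_add_distrib, ← Finset.mul_sum]
    rw [h4, hf.2.2.2] at h2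
    linarith
  have hkey : sInf S ≤ K * sInf S' + C * W := by
    have h1 : (sInf S - C * W) / K ≤ sInf S' := by
      refine le_csInf hS'ne fun x hx => ?_
      rw [div_le_iff₀ hK]
      have := key x hx
      linarith
    rw [div_le_iff₀ hK] at h1
    linarith
  show (1 / W) * sInf S ≤ K * ((1 / W) * sInf S') + C
  calc (1 / W) * sInf S ≤ (1 / W) * (K * sInf S' + C * W) :=
        mul_le_mul_of_nonneg_left hkey (by positivity)
    _ = K * ((1 / W) * sInf S') + C := by field_simp

/-- The pointwise squared-cost perturbation bound. -/
lemma sq_perturb {x y ε Δ : ℝ} (hx : 0 ≤ x) (hy : 0 ≤ y) (hε : 0 < ε)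
    (h : x ≤ y + 2 * (ε * Δ)) :
    x ^ 2 ≤ (1 + 2 * ε) * y ^ 2 + 2 * ε * (1 + 2 * ε) * Δ ^ 2 := by
  nlinarith [sq_nonneg (y - Δ), sq_nonneg x, mul_pos hε hε]

/-- Theorem 1 of the paper: if `T̃` is a `c`-approximate optimal rigid
transformation (isometry of `ℝ^d`) for the compressed instance `(S_A, S_B)`
(given in expanded representation `a', b'` with the same weights, each point
moved by at most `εΔ`), then `T̃` is close to optimal for the original instance:
`EMD(A, T̃(B)) ≤ c(1+2ε)² min_T EMD(A, T(B)) + 2ε(c+1+2cε)(1+2ε)Δ²`.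
The `min_T` statements are expressed by quantifying over all rigid `T`. -/
theorem stmt4 {d n1 n2 : ℕ}
    (a a' : Fin n1 → EuclideanSpace ℝ (Fin d)) (b b' : Fin n2 → EuclideanSpace ℝ (Fin d))
    (α : Fin n1 → ℝ) (β : Fin n2 → ℝ)
    (hα : ∀ i, 0 ≤ α i) (hβ : ∀ j, 0 ≤ β j)
    (hWA : 0 < ∑ i, α i) (hWB : 0 < ∑ j, β j)
    (ε Δ : ℝ) (hε : 0 < ε) (hΔ : 0 < Δ)
    -- Δ is (an upper bound on) the maximum of the diameters of A and B
    (hΔA : ∀ i i', ‖a i - a i'‖ ≤ Δ) (hΔB : ∀ j j', ‖b j - b j'‖ ≤ Δ)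
    (ha : ∀ i, ‖a i - a' i‖ ≤ ε * Δ) (hb : ∀ j, ‖b j - b' j‖ ≤ ε * Δ)
    (c : ℝ) (hc : 1 ≤ c)
    (Ttil : EuclideanSpace ℝ (Fin d) ≃ᵢ EuclideanSpace ℝ (Fin d))
    -- `T̃` is a c-approximation on the compressed instance:
    (happrox : ∀ T : EuclideanSpace ℝ (Fin d) ≃ᵢ EuclideanSpace ℝ (Fin d),
      EMD a' (fun j => Ttil (b' j)) α β ≤ c * EMD a' (fun j => T (b' j)) α β) :
    ∀ T : EuclideanSpace ℝ (Fin d) ≃ᵢ EuclideanSpace ℝ (Fin d),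
      EMD a (fun j => Ttil (b j)) α β ≤
        c * (1 + 2 * ε) ^ 2 * EMD a (fun j => T (b j)) α β +
          2 * ε * (c + 1 + 2 * c * ε) * (1 + 2 * ε) * Δ ^ 2 := by
  intro T
  -- triangle inequality through the compressed points, for any isometry U
  have tri : ∀ (U : EuclideanSpace ℝ (Fin d) ≃ᵢ EuclideanSpace ℝ (Fin d)) (i j),
      ‖a i - U (b j)‖ ≤ ‖a' i - U (b' j)‖ + 2 * (ε * Δ) := by
    intro U i j
    have h1 : ‖a i - U (b j)‖ ≤ ‖a i - a' i‖ + ‖a' i - U (b' j)‖ + ‖U (b' j) - U (b j)‖ := by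
      have := norm_sub_le_norm_sub_add_norm_sub (a i) (a' i) (U (b j))
      have := norm_sub_le_norm_sub_add_norm_sub (a' i) (U (b' j)) (U (b j))
      linarith
    have h2 : ‖U (b' j) - U (b j)‖ = ‖b' j - b j‖ := by
      rw [← dist_eq_norm, ← dist_eq_norm]
      exact U.dist_eq _ _
    have h3 : ‖b' j - b j‖ ≤ ε * Δ := by
      rw [norm_sub_rev]; exact hb j
    have := ha i
    rw [h2] at h1
    linarith
  have tri' : ∀ (U : EuclideanSpace ℝ (Fin d) ≃ᵢ EuclideanSpace ℝ (Fin d)) (i j),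
      ‖a' i - U (b' j)‖ ≤ ‖a i - U (b j)‖ + 2 * (ε * Δ) := by
    intro U i j
    have h1 : ‖a' i - U (b' j)‖ ≤ ‖a' i - a i‖ + ‖a i - U (b j)‖ + ‖U (b j) - U (b' j)‖ := by
      have := norm_sub_le_norm_sub_add_norm_sub (a' i) (a i) (U (b' j))
      have := norm_sub_le_norm_sub_add_norm_sub (a i) (U (b j)) (U (b' j))
      linarith
    have h2 : ‖U (b j) - U (b' j)‖ = ‖b j - b' j‖ := by
      rw [← dist_eq_norm, ← dist_eq_norm]
      exact U.dist_eq _ _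
    have h3 : ‖a' i - a i‖ ≤ ε * Δ := by
      rw [norm_sub_rev]; exact ha i
    have := hb j
    rw [h2] at h1
    linarith
  set K : ℝ := 2 * ε * (1 + 2 * ε) * Δ ^ 2 with hKdef
  have hK12 : (0:ℝ) < 1 + 2 * ε := by linarith
  have key1 : EMD a (fun j => Ttil (b j)) α β ≤
      (1 + 2 * ε) * EMD a' (fun j => Ttil (b' j)) α β + K :=
    emd_compare _ _ _ _ α β hα hβ hWA hWB _ _ hK12
      (fun i j => sq_perturb (norm_nonneg _) (norm_nonneg _) hε (tri Ttil i j))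
  have key3 : EMD a' (fun j => T (b' j)) α β ≤
      (1 + 2 * ε) * EMD a (fun j => T (b j)) α β + K :=
    emd_compare _ _ _ _ α β hα hβ hWA hWB _ _ hK12
      (fun i j => sq_perturb (norm_nonneg _) (norm_nonneg _) hε (tri' T i j))
  have key2 := happrox T
  have hc0 : (0:ℝ) ≤ c := by linarith
  have p1 := mul_le_mul_of_nonneg_left key2 hK12.le
  have p2 := mul_le_mul_of_nonneg_left key3 (mul_nonneg hK12.le hc0)
  have final : (1 + 2 * ε) * (c * ((1 + 2 * ε) * EMD a (fun j => T (b j)) α β + K)) + K =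
      c * (1 + 2 * ε) ^ 2 * EMD a (fun j => T (b j)) α β +
        2 * ε * (c + 1 + 2 * c * ε) * (1 + 2 * ε) * Δ ^ 2 := by
    rw [hKdef]; ring
  nlinarith [key1, p1, p2, final]
end

section
/- Let P be a finite set in a metric space and let S = {c₁,…,c_k} ⊆ P be the centers produced by Gonzalez's farthest-point traversal (c₁ arbitrary, and each subsequent c_i is a point of P maximizing the distance to the already-chosen centers). Then the covering radius r = max_{p ∈ P} min_{c ∈ S} d(p, c) satisfies r ≤ min{d(c_i, c_j) : 1 ≤ i ≠ j ≤ k}, i.e., the covering radius is at most the minimum pairwise distance among the selected centers. -/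
/-- Gonzalez's farthest-point traversal guarantee: if each center `c i`
maximizes, over `p ∈ P`, the minimum distance to the previously chosen centers
`c j`, `j < i`, then the covering radius of the centers is at most the minimum
pairwise distance among distinct centers.  (Minima over index sets are
expressed via `sInf` of the corresponding sets of distances.) -/
theorem stmt10 {X : Type*} [MetricSpace X] (P : Finset X) (hP : P.Nonempty)
    (k : ℕ) (hk : 0 < k) (c : Fin k → X) (hcP : ∀ i, c i ∈ P)
    (hgreedy : ∀ (i : Fin k), ∀ p ∈ P,
      sInf {e : ℝ | ∃ j : Fin k, j < i ∧ e = dist p (c j)} ≤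
        sInf {e : ℝ | ∃ j : Fin k, j < i ∧ e = dist (c i) (c j)}) :
    ∀ p ∈ P, ∀ i j : Fin k, i ≠ j →
      sInf {e : ℝ | ∃ l : Fin k, e = dist p (c l)} ≤ dist (c i) (c j) := by
  have key : ∀ p ∈ P, ∀ i j : Fin k, j < i →
      sInf {e : ℝ | ∃ l : Fin k, e = dist p (c l)} ≤ dist (c i) (c j) := by
    intro p hp i j hji
    have bddfull : BddBelow {e : ℝ | ∃ l : Fin k, e = dist p (c l)} :=
      ⟨0, by rintro e ⟨l, rfl⟩; exact dist_nonneg⟩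
    have bddc : BddBelow {e : ℝ | ∃ l : Fin k, l < i ∧ e = dist (c i) (c l)} :=
      ⟨0, by rintro e ⟨l, _, rfl⟩; exact dist_nonneg⟩
    have h1 : sInf {e : ℝ | ∃ l : Fin k, e = dist p (c l)} ≤
        sInf {e : ℝ | ∃ l : Fin k, l < i ∧ e = dist p (c l)} := by
      refine csInf_le_csInf bddfull ⟨dist p (c j), j, hji, rfl⟩ ?_
      rintro e ⟨l, _, rfl⟩; exact ⟨l, rfl⟩
    have h2 := hgreedy i p hp
    have h3 : sInf {e : ℝ | ∃ l : Fin k, l < i ∧ e = dist (c i) (c l)} ≤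
        dist (c i) (c j) := csInf_le bddc ⟨j, hji, rfl⟩
    exact h1.trans (h2.trans h3)
  intro p hp i j hij
  rcases lt_or_gt_of_ne hij with h | h
  · rw [dist_comm]; exact key p hp j i h
  · exact key p hp i j h
end

section
/- Let M_A, M_B be d×N real matrices and let the SVD of M_A M_Bᵀ be UΣVᵀ with U, V orthogonal and Σ diagonal with nonnegative entries. Then R = UVᵀ maximizes trace(R M_B M_Aᵀ) over all orthogonal d×d matrices R; equivalently, R = UVᵀ minimizes ‖M_A − R M_B‖_F² over orthogonal R. -/
open Matrix

lemma sq_sum_eq_trace {d N : ℕ} (M : Matrix (Fin d) (Fin N) ℝ) :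
    ∑ i, ∑ j, (M i j) ^ 2 = trace (M * Mᵀ) := by
  simp [trace, Matrix.mul_apply, Matrix.diag, sq]

lemma diag_le_one {d : ℕ} (Q : Matrix (Fin d) (Fin d) ℝ) (hQ : Qᵀ * Q = 1) (i : Fin d) :
    Q i i ≤ 1 := by
  have h : ∑ k, Q k i * Q k i = 1 := by
    have := congrFun (congrFun hQ i) i
    simpa [Matrix.mul_apply, Matrix.one_apply] using this
  have h1 : (Q i i) ^ 2 ≤ 1 := by
    calc (Q i i) ^ 2 ≤ ∑ k, Q k i * Q k i := by
          have := Finset.single_le_sum (f := fun k => Q k i * Q k i)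
            (fun k _ => mul_self_nonneg _) (Finset.mem_univ i)
          simpa [sq] using this
      _ = 1 := h
  nlinarith [sq_nonneg (Q i i - 1)]

lemma trace_key {d N : ℕ} (MA MB : Matrix (Fin d) (Fin N) ℝ)
    (U V S : Matrix (Fin d) (Fin d) ℝ)
    (hSdiag : ∀ i j, i ≠ j → S i j = 0)
    (hSVD : MA * MBᵀ = U * S * Vᵀ)
    (R : Matrix (Fin d) (Fin d) ℝ) :
    trace (R * MB * MAᵀ) = ∑ i, (Uᵀ * R * V) i i * S i i := by
  have hSsymm : Sᵀ = S := by
    ext i j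
    by_cases h : i = j
    · simp [h]
    · simp [Matrix.transpose_apply, hSdiag i j h, hSdiag j i (Ne.symm h)]
  have h1 : MB * MAᵀ = V * S * Uᵀ := by
    have := congrArg Matrix.transpose hSVD
    simpa [Matrix.transpose_mul, hSsymm, Matrix.mul_assoc] using this
  rw [Matrix.mul_assoc, h1]
  have h2 : R * (V * S * Uᵀ) = (R * V * S) * Uᵀ := by simp [Matrix.mul_assoc]
  rw [h2, Matrix.trace_mul_comm]
  have h3 : Uᵀ * (R * V * S) = (Uᵀ * R * V) * S := by simp [Matrix.mul_assoc]
  rw [h3, Matrix.trace]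
  apply Finset.sum_congr rfl
  intro i _
  simp only [Matrix.diag_apply, Matrix.mul_apply]
  rw [Finset.sum_eq_single i]
  · intro k _ hk; rw [hSdiag k i hk, mul_zero]
  · intro h; exact absurd (Finset.mem_univ i) h

/-- The Orthogonal Procrustes solution (Schönemann): if `M_A M_Bᵀ = U Σ Vᵀ` is
an SVD (with `U, V` orthogonal and `Σ` diagonal with nonnegative entries), then
`R = U Vᵀ` maximizes `trace (R M_B M_Aᵀ)` over orthogonal `R`, and equivalently
minimizes `‖M_A − R M_B‖_F²`. -/
theorem stmt16 {d N : ℕ} (MA MB : Matrix (Fin d) (Fin N) ℝ)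
    (U V S : Matrix (Fin d) (Fin d) ℝ)
    (hU : Uᵀ * U = 1) (hU' : U * Uᵀ = 1)
    (hV : Vᵀ * V = 1) (hV' : V * Vᵀ = 1)
    (hSdiag : ∀ i j, i ≠ j → S i j = 0) (hSnn : ∀ i, 0 ≤ S i i)
    (hSVD : MA * MBᵀ = U * S * Vᵀ) :
    ∀ R : Matrix (Fin d) (Fin d) ℝ, Rᵀ * R = 1 →
      trace (R * MB * MAᵀ) ≤ trace ((U * Vᵀ) * MB * MAᵀ) ∧
      ∑ i, ∑ j, ((MA - (U * Vᵀ) * MB) i j) ^ 2 ≤ ∑ i, ∑ j, ((MA - R * MB) i j) ^ 2 := by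
  intro R hR
  -- trace bound
  have hQ : (Uᵀ * R * V)ᵀ * (Uᵀ * R * V) = 1 := by
    calc (Uᵀ * R * V)ᵀ * (Uᵀ * R * V) = Vᵀ * (Rᵀ * ((U * Uᵀ) * (R * V))) := by
          simp [Matrix.transpose_mul, Matrix.mul_assoc]
      _ = Vᵀ * ((Rᵀ * R) * V) := by rw [hU']; simp [Matrix.mul_assoc]
      _ = 1 := by rw [hR]; simp [hV]
  have hUVt : Uᵀ * (U * Vᵀ) * V = 1 := by
    calc Uᵀ * (U * Vᵀ) * V = (Uᵀ * U) * (Vᵀ * V) := by simp [Matrix.mul_assoc]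
      _ = 1 := by rw [hU, hV, one_mul]
  have htr : trace (R * MB * MAᵀ) ≤ trace ((U * Vᵀ) * MB * MAᵀ) := by
    rw [trace_key MA MB U V S hSdiag hSVD R, trace_key MA MB U V S hSdiag hSVD (U * Vᵀ),
      hUVt]
    apply Finset.sum_le_sum
    intro i _
    have h1 : (Uᵀ * R * V) i i ≤ 1 := diag_le_one _ hQ i
    have := mul_le_mul_of_nonneg_right h1 (hSnn i)
    simpa using this
  refine ⟨htr, ?_⟩
  -- Frobenius expansion
  have expand : ∀ W : Matrix (Fin d) (Fin d) ℝ, Wᵀ * W = 1 →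
      ∑ i, ∑ j, ((MA - W * MB) i j) ^ 2
        = trace (MA * MAᵀ) + trace (MB * MBᵀ) - 2 * trace (W * MB * MAᵀ) := by
    intro W hW
    rw [sq_sum_eq_trace]
    have h1 : (MA - W * MB) * (MA - W * MB)ᵀ
        = MA * MAᵀ - MA * (MBᵀ * Wᵀ) - W * MB * MAᵀ + W * (MB * MBᵀ) * Wᵀ := by
      simp [Matrix.sub_mul, Matrix.mul_sub, Matrix.transpose_mul, Matrix.mul_assoc]
      abel
    rw [h1]
    have h2 : trace (MA * (MBᵀ * Wᵀ)) = trace (W * MB * MAᵀ) := by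
      rw [← Matrix.trace_transpose (W * MB * MAᵀ)]
      congr 1
      simp [Matrix.transpose_mul, Matrix.mul_assoc]
    have h3 : trace (W * (MB * MBᵀ) * Wᵀ) = trace (MB * MBᵀ) := by
      rw [Matrix.trace_mul_cycle, ← Matrix.mul_assoc, hW, Matrix.one_mul]
    simp only [Matrix.trace_add, Matrix.trace_sub, h2, h3]
    ring
  rw [expand R hR, expand (U * Vᵀ) (by
    calc (U * Vᵀ)ᵀ * (U * Vᵀ) = V * ((Uᵀ * U) * Vᵀ) := by
          simp [Matrix.transpose_mul, Matrix.mul_assoc]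
      _ = 1 := by rw [hU, one_mul, hV'])]
  linarith
end
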